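/- arXiv:hep-th/0510231 — 2 statements merged into one kernel-verified Lean document; each statement's English description precedes it below -/
import Mathlib

section
/- The map F ↦ (P₊F, P₋F) is a bijection from the set of decomposable real antisymmetric 4×4 matrices of unit norm (the Grassmannian G(2,4) of oriented 2-planes in ℝ⁴) onto S²₊ × S²₋, where S²₊ is the set of self-dual matrices of squared norm 1/2 and S²₋ is the set of anti-self-dual matrices of squared norm 1/2. In particular, for any self-dual a with ‖a‖² = 1/2 and anti-self-dual b with ‖b‖² = 1/2, the sum a + b is decomposable of unit norm. -/
open Matrix

/-- The Hodge star operator on (antisymmetric) real 4×4 matrices, determined by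
`(⋆F)₁₂ = F₃₄`, `(⋆F)₁₃ = −F₂₄`, `(⋆F)₁₄ = F₂₃`, `(⋆F)₂₃ = F₁₄`,
`(⋆F)₂₄ = −F₁₃`, `(⋆F)₃₄ = F₁₂` (indices here are 1-based). -/
def hodge (F : Matrix (Fin 4) (Fin 4) ℝ) : Matrix (Fin 4) (Fin 4) ℝ :=
  !![0, F 2 3, -(F 1 3), F 1 2;
     -(F 2 3), 0, F 0 3, -(F 0 2);
     F 1 3, -(F 0 3), 0, F 0 1;
     -(F 1 2), F 0 2, -(F 0 1), 0]

/-- The inner product `⟨F,G⟩ = Σ_{i<j} F_{ij} G_{ij}` on 4×4 matrices. -/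
def inner2 (F G : Matrix (Fin 4) (Fin 4) ℝ) : ℝ :=
  ∑ i : Fin 4, ∑ j : Fin 4, if i < j then F i j * G i j else 0

/-- The projection `P₊ = ½(1 + ⋆)` onto self-dual matrices. -/
noncomputable def Pplus (F : Matrix (Fin 4) (Fin 4) ℝ) : Matrix (Fin 4) (Fin 4) ℝ :=
  (1/2 : ℝ) • (F + hodge F)

/-- The projection `P₋ = ½(1 − ⋆)` onto anti-self-dual matrices. -/
noncomputable def Pminus (F : Matrix (Fin 4) (Fin 4) ℝ) : Matrix (Fin 4) (Fin 4) ℝ :=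
  (1/2 : ℝ) • (F - hodge F)

/-- The Grassmannian `G(2,4)` of oriented 2-planes in ℝ⁴, realized as the set of
decomposable antisymmetric 4×4 matrices of unit norm. -/
def G24 : Set (Matrix (Fin 4) (Fin 4) ℝ) :=
  {F | (∃ u v : Fin 4 → ℝ, F = Matrix.vecMulVec u v - Matrix.vecMulVec v u) ∧
    inner2 F F = 1}

/-- The sphere `S²₊` of self-dual matrices of squared norm `1/2`. -/
def S2plus : Set (Matrix (Fin 4) (Fin 4) ℝ) :=
  {a | aᵀ = -a ∧ hodge a = a ∧ inner2 a a = 1/2}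

/-- The sphere `S²₋` of anti-self-dual matrices of squared norm `1/2`. -/
def S2minus : Set (Matrix (Fin 4) (Fin 4) ℝ) :=
  {b | bᵀ = -b ∧ hodge b = -b ∧ inner2 b b = 1/2}

/-! The Hodge star is an involution on antisymmetric matrices with `⟨F, ⋆F⟩ = 2 Pf F`, so
`‖P₊F‖² = (‖F‖² + 2 Pf F) / 2` and `‖P₋F‖² = (‖F‖² - 2 Pf F) / 2`. An antisymmetric `F` is
decomposable exactly when `Pf F = 0`: antisymmetry then yields every Plücker relation, which says
that `F i j • F` is the wedge of the rows `F i` and `F j`. Hence an antisymmetric `F` lies in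
`G(2,4)` iff `P₊F ∈ S²₊` and `P₋F ∈ S²₋`, and since `P₊ + P₋ = 1` the inverse map is
`(a, b) ↦ a + b`. -/

def pfaffian4 (F : Matrix (Fin 4) (Fin 4) ℝ) : ℝ :=
  F 0 1 * F 2 3 - F 0 2 * F 1 3 + F 0 3 * F 1 2

lemma entry_swap_of_transpose_eq_neg {n R : Type*} [Neg R] {F : Matrix n n R} (hF : Fᵀ = -F)
    (i j : n) : F j i = -F i j :=
  congrFun (congrFun hF i) j

lemma diag_eq_zero_of_transpose_eq_neg {n : Type*} {F : Matrix n n ℝ} (hF : Fᵀ = -F) (i : n) :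
    F i i = 0 := by
  linarith [entry_swap_of_transpose_eq_neg hF i i]

lemma hodge_transpose (F : Matrix (Fin 4) (Fin 4) ℝ) : (hodge F)ᵀ = -hodge F := by
  ext i j; fin_cases i <;> fin_cases j <;> simp [hodge]

lemma hodge_hodge {F : Matrix (Fin 4) (Fin 4) ℝ} (hF : Fᵀ = -F) : hodge (hodge F) = F := by
  have h := entry_swap_of_transpose_eq_neg hF
  ext i j; fin_cases i <;> fin_cases j <;>
    simp [hodge, diag_eq_zero_of_transpose_eq_neg hF, h 0 1, h 0 2, h 0 3, h 1 2, h 1 3, h 2 3]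

lemma hodge_add (F G : Matrix (Fin 4) (Fin 4) ℝ) : hodge (F + G) = hodge F + hodge G := by
  ext i j; fin_cases i <;> fin_cases j <;> simp [hodge, add_comm]

lemma hodge_smul (c : ℝ) (F : Matrix (Fin 4) (Fin 4) ℝ) : hodge (c • F) = c • hodge F := by
  ext i j; fin_cases i <;> fin_cases j <;> simp [hodge]

lemma hodge_sub (F G : Matrix (Fin 4) (Fin 4) ℝ) : hodge (F - G) = hodge F - hodge G := by
  ext i j; fin_cases i <;> fin_cases j <;> simp [hodge, add_comm, sub_eq_add_neg]

section Decomposable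

lemma transpose_vecMulVec_sub (u v : Fin 4 → ℝ) :
    (vecMulVec u v - vecMulVec v u)ᵀ = -(vecMulVec u v - vecMulVec v u) := by
  rw [transpose_sub, transpose_vecMulVec, transpose_vecMulVec, neg_sub]

lemma pfaffian4_vecMulVec_sub (u v : Fin 4 → ℝ) :
    pfaffian4 (vecMulVec u v - vecMulVec v u) = 0 := by
  simp only [pfaffian4, Matrix.sub_apply, vecMulVec_apply]; ring

variable {F : Matrix (Fin 4) (Fin 4) ℝ}

lemma smul_eq_vecMulVec_sub_of_pfaffian4_eq_zero (hF : Fᵀ = -F) (hpf : pfaffian4 F = 0)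
    (i j : Fin 4) : F i j • F = vecMulVec (F i) (F j) - vecMulVec (F j) (F i) := by
  have h := entry_swap_of_transpose_eq_neg hF
  unfold pfaffian4 at hpf
  ext k l
  simp only [Matrix.smul_apply, Matrix.sub_apply, vecMulVec_apply, smul_eq_mul]
  fin_cases i <;> fin_cases j <;> fin_cases k <;> fin_cases l <;>
    simp only [Fin.reduceFinMk, Fin.isValue, diag_eq_zero_of_transpose_eq_neg hF,
      h 0 1, h 0 2, h 0 3, h 1 2, h 1 3, h 2 3, mul_zero, zero_mul] <;>
    first | ring1 | linear_combination hpf | linear_combination -hpf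

lemma exists_eq_vecMulVec_sub_iff :
    (∃ u v : Fin 4 → ℝ, F = vecMulVec u v - vecMulVec v u) ↔ Fᵀ = -F ∧ pfaffian4 F = 0 := by
  constructor
  · rintro ⟨u, v, rfl⟩
    exact ⟨transpose_vecMulVec_sub u v, pfaffian4_vecMulVec_sub u v⟩
  · rintro ⟨hF, hpf⟩
    by_cases hF0 : ∃ i j, F i j ≠ 0
    · obtain ⟨i, j, hij⟩ := hF0
      refine ⟨(F i j)⁻¹ • F i, F j, ?_⟩
      rw [smul_vecMulVec, vecMulVec_smul, ← smul_sub,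
        ← smul_eq_vecMulVec_sub_of_pfaffian4_eq_zero hF hpf, inv_smul_smul₀ hij]
    · push Not at hF0
      exact ⟨0, 0, by ext i j; simp [hF0]⟩

lemma mem_G24_iff : F ∈ G24 ↔ Fᵀ = -F ∧ pfaffian4 F = 0 ∧ inner2 F F = 1 := by
  rw [← and_assoc, ← exists_eq_vecMulVec_sub_iff]
  rfl

end Decomposable

section Projections

variable {F : Matrix (Fin 4) (Fin 4) ℝ}

lemma inner2_eq (F G : Matrix (Fin 4) (Fin 4) ℝ) :
    inner2 F G = F 0 1 * G 0 1 + F 0 2 * G 0 2 + F 0 3 * G 0 3 + F 1 2 * G 1 2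
      + F 1 3 * G 1 3 + F 2 3 * G 2 3 := by
  simp [inner2, Fin.sum_univ_four, add_assoc]

lemma inner2_Pplus_self (F : Matrix (Fin 4) (Fin 4) ℝ) :
    inner2 (Pplus F) (Pplus F) = (inner2 F F + 2 * pfaffian4 F) / 2 := by
  simp only [inner2_eq, pfaffian4, Pplus, hodge, Matrix.smul_apply, Matrix.add_apply, of_apply,
    cons_val', cons_val_one, cons_val_zero, cons_val_fin_one, cons_val, smul_eq_mul]
  ring

lemma inner2_Pminus_self (F : Matrix (Fin 4) (Fin 4) ℝ) :
    inner2 (Pminus F) (Pminus F) = (inner2 F F - 2 * pfaffian4 F) / 2 := by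
  simp only [inner2_eq, pfaffian4, Pminus, hodge, Matrix.smul_apply, Matrix.sub_apply, of_apply,
    cons_val', cons_val_one, cons_val_zero, cons_val_fin_one, cons_val, smul_eq_mul]
  ring

lemma Pplus_mem_S2plus_iff (hF : Fᵀ = -F) :
    Pplus F ∈ S2plus ↔ inner2 F F + 2 * pfaffian4 F = 1 := by
  have hT : (Pplus F)ᵀ = -Pplus F := by
    rw [Pplus, transpose_smul, transpose_add, hF, hodge_transpose, ← neg_add, smul_neg]
  have hH : hodge (Pplus F) = Pplus F := by
    rw [Pplus, hodge_smul, hodge_add, hodge_hodge hF, add_comm]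
  simp only [S2plus, Set.mem_ofPred_eq, hT, hH, inner2_Pplus_self, true_and]
  constructor <;> intro h <;> linarith

lemma Pminus_mem_S2minus_iff (hF : Fᵀ = -F) :
    Pminus F ∈ S2minus ↔ inner2 F F - 2 * pfaffian4 F = 1 := by
  have hT : (Pminus F)ᵀ = -Pminus F := by
    rw [Pminus, transpose_smul, transpose_sub, hF, hodge_transpose, neg_sub_neg, ← neg_sub,
      smul_neg]
  have hH : hodge (Pminus F) = -Pminus F := by
    rw [Pminus, hodge_smul, hodge_sub, hodge_hodge hF, ← smul_neg, neg_sub]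
  simp only [S2minus, Set.mem_ofPred_eq, hT, hH, inner2_Pminus_self, true_and]
  constructor <;> intro h <;> linarith

lemma mem_G24_iff_Pplus_mem_and_Pminus_mem (hF : Fᵀ = -F) :
    F ∈ G24 ↔ Pplus F ∈ S2plus ∧ Pminus F ∈ S2minus := by
  rw [mem_G24_iff, Pplus_mem_S2plus_iff hF, Pminus_mem_S2minus_iff hF]
  constructor
  · rintro ⟨-, hpf, hnorm⟩
    constructor <;> linarith
  · rintro ⟨hplus, hminus⟩
    exact ⟨hF, by linarith, by linarith⟩

lemma Pplus_add_Pminus (F : Matrix (Fin 4) (Fin 4) ℝ) : Pplus F + Pminus F = F := by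
  rw [Pplus, Pminus]; module

variable {a b : Matrix (Fin 4) (Fin 4) ℝ}

lemma Pplus_add (ha : hodge a = a) (hb : hodge b = -b) : Pplus (a + b) = a := by
  rw [Pplus, hodge_add, ha, hb]; module

lemma Pminus_add (ha : hodge a = a) (hb : hodge b = -b) : Pminus (a + b) = b := by
  rw [Pminus, hodge_add, ha, hb]; module

lemma add_mem_G24 (ha : a ∈ S2plus) (hb : b ∈ S2minus) : a + b ∈ G24 := by
  have hT : (a + b)ᵀ = -(a + b) := by rw [transpose_add, ha.1, hb.1, neg_add]
  rw [mem_G24_iff_Pplus_mem_and_Pminus_mem hT, Pplus_add ha.2.1 hb.2.1, Pminus_add ha.2.1 hb.2.1]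
  exact ⟨ha, hb⟩

end Projections

/-- `F ↦ (P₊F, P₋F)` is a bijection from `G(2,4)` onto `S²₊ × S²₋`;
in particular, for `a ∈ S²₊` and `b ∈ S²₋` the sum `a + b` is decomposable of
unit norm. -/
theorem stmt_3 :
    Set.BijOn (fun F => (Pplus F, Pminus F)) G24 (S2plus ×ˢ S2minus) ∧
    ∀ a ∈ S2plus, ∀ b ∈ S2minus, a + b ∈ G24 := by
  refine ⟨⟨?_, ?_, ?_⟩, fun a ha b hb => add_mem_G24 ha hb⟩
  · intro F hF
    exact (mem_G24_iff_Pplus_mem_and_Pminus_mem (mem_G24_iff.1 hF).1).1 hF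
  · intro F _ G _ h
    simp only [Prod.mk.injEq] at h
    rw [← Pplus_add_Pminus F, ← Pplus_add_Pminus G, h.1, h.2]
  · rintro ⟨a, b⟩ ⟨ha, hb⟩
    exact ⟨a + b, add_mem_G24 ha hb,
      congrArg₂ Prod.mk (Pplus_add ha.2.1 hb.2.1) (Pminus_add ha.2.1 hb.2.1)⟩
end

section
/- Every real antisymmetric 4×4 matrix F can be brought into normal form by a special orthogonal transformation: there exists S ∈ SO(4) such that S F Sᵀ has all entries zero except the (1,2), (2,1), (3,4), (4,3) entries, with |(SFSᵀ)₁₂| = (1/√2)·√(Σ_{i<j}F_{ij}² + √δ) and |(SFSᵀ)₃₄| = (1/√2)·√(Σ_{i<j}F_{ij}² − √δ), where δ = [(F₁₃+F₂₄)² + (F₁₂−F₃₄)² + (F₁₄−F₂₃)²]·[(F₁₃−F₂₄)² + (F₁₂+F₃₄)² + (F₁₄+F₂₃)²]. -/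
open Matrix

noncomputable def Lq (a b c d : ℝ) : Matrix (Fin 4) (Fin 4) ℝ :=
  !![a,-b,-c,-d; b,a,-d,c; c,d,a,-b; d,-c,b,a]

noncomputable def Rq (a b c d : ℝ) : Matrix (Fin 4) (Fin 4) ℝ :=
  !![a,-b,-c,-d; b,a,d,-c; c,-d,a,b; d,c,-b,a]

lemma Lq_mul (a0 a1 a2 a3 b0 b1 b2 b3 : ℝ) :
    Lq a0 a1 a2 a3 * Lq b0 b1 b2 b3 =
      Lq (a0*b0 - a1*b1 - a2*b2 - a3*b3) (a0*b1 + a1*b0 + a2*b3 - a3*b2)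
        (a0*b2 - a1*b3 + a2*b0 + a3*b1) (a0*b3 + a1*b2 - a2*b1 + a3*b0) := by
  ext i j
  fin_cases i <;> fin_cases j <;>
    simp [Lq, Matrix.mul_apply, Fin.sum_univ_four] <;> ring

lemma Rq_mul (a0 a1 a2 a3 b0 b1 b2 b3 : ℝ) :
    Rq a0 a1 a2 a3 * Rq b0 b1 b2 b3 =
      Rq (b0*a0 - b1*a1 - b2*a2 - b3*a3) (b0*a1 + b1*a0 + b2*a3 - b3*a2)
        (b0*a2 - b1*a3 + b2*a0 + b3*a1) (b0*a3 + b1*a2 - b2*a1 + b3*a0) := by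
  ext i j
  fin_cases i <;> fin_cases j <;>
    simp [Rq, Matrix.mul_apply, Fin.sum_univ_four] <;> ring

lemma LRcomm (a0 a1 a2 a3 b0 b1 b2 b3 : ℝ) :
    Lq a0 a1 a2 a3 * Rq b0 b1 b2 b3 = Rq b0 b1 b2 b3 * Lq a0 a1 a2 a3 := by
  ext i j
  fin_cases i <;> fin_cases j <;>
    simp [Lq, Rq, Matrix.mul_apply, Fin.sum_univ_four] <;> ring

lemma Lq_transpose (a0 a1 a2 a3 : ℝ) :
    (Lq a0 a1 a2 a3)ᵀ = Lq a0 (-a1) (-a2) (-a3) := by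
  ext i j
  fin_cases i <;> fin_cases j <;> simp [Lq]

lemma Rq_transpose (a0 a1 a2 a3 : ℝ) :
    (Rq a0 a1 a2 a3)ᵀ = Rq a0 (-a1) (-a2) (-a3) := by
  ext i j
  fin_cases i <;> fin_cases j <;> simp [Rq]

lemma Lq_conj_self (a0 a1 a2 a3 : ℝ) (ha : a0^2+a1^2+a2^2+a3^2 = 1) :
    Lq a0 a1 a2 a3 * Lq a0 (-a1) (-a2) (-a3) = 1 := by
  ext i j
  fin_cases i <;> fin_cases j <;>
    simp [Lq, Matrix.mul_apply, Fin.sum_univ_four, Matrix.one_apply] <;>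
    first | linear_combination ha | ring

lemma Rq_conj_self (a0 a1 a2 a3 : ℝ) (ha : a0^2+a1^2+a2^2+a3^2 = 1) :
    Rq a0 (-a1) (-a2) (-a3) * Rq a0 a1 a2 a3 = 1 := by
  ext i j
  fin_cases i <;> fin_cases j <;>
    simp [Rq, Matrix.mul_apply, Fin.sum_univ_four, Matrix.one_apply] <;>
    first | linear_combination ha | ring

lemma Lq_det (a0 a1 a2 a3 : ℝ) :
    (Lq a0 a1 a2 a3).det = (a0^2+a1^2+a2^2+a3^2)^2 := by
  simp [Lq, Matrix.det_succ_row_zero, Fin.sum_univ_succ, Fin.succAbove, Fin.castSucc, Fin.castAdd, Fin.castLE]; ring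

lemma Rq_det (a0 a1 a2 a3 : ℝ) :
    (Rq a0 a1 a2 a3).det = (a0^2+a1^2+a2^2+a3^2)^2 := by
  simp [Rq, Matrix.det_succ_row_zero, Fin.sum_univ_succ, Fin.succAbove, Fin.castSucc, Fin.castAdd, Fin.castLE]; ring

lemma Lq_congr {a0 a1 a2 a3 b0 b1 b2 b3 : ℝ} (h0 : a0 = b0) (h1 : a1 = b1)
    (h2 : a2 = b2) (h3 : a3 = b3) : Lq a0 a1 a2 a3 = Lq b0 b1 b2 b3 := by
  rw [h0, h1, h2, h3]

lemma Rq_congr {a0 a1 a2 a3 b0 b1 b2 b3 : ℝ} (h0 : a0 = b0) (h1 : a1 = b1)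
    (h2 : a2 = b2) (h3 : a3 = b3) : Rq a0 a1 a2 a3 = Rq b0 b1 b2 b3 := by
  rw [h0, h1, h2, h3]

lemma rot_exists (p1 p2 p3 : ℝ) :
    ∃ a0 a1 a2 a3 : ℝ, a0^2+a1^2+a2^2+a3^2 = 1 ∧
      Lq a0 a1 a2 a3 * Lq 0 p1 p2 p3 * Lq a0 (-a1) (-a2) (-a3)
        = Lq 0 (Real.sqrt (p1^2+p2^2+p3^2)) 0 0 ∧
      Rq a0 (-a1) (-a2) (-a3) * Rq 0 p1 p2 p3 * Rq a0 a1 a2 a3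
        = Rq 0 (Real.sqrt (p1^2+p2^2+p3^2)) 0 0 := by
  rcases eq_or_ne (p1^2+p2^2+p3^2) 0 with h0 | h0
  · have hp1 : p1 = 0 := by nlinarith [sq_nonneg p1, sq_nonneg p2, sq_nonneg p3]
    have hp2 : p2 = 0 := by nlinarith [sq_nonneg p1, sq_nonneg p2, sq_nonneg p3]
    have hp3 : p3 = 0 := by nlinarith [sq_nonneg p1, sq_nonneg p2, sq_nonneg p3]
    subst hp1; subst hp2; subst hp3
    refine ⟨1, 0, 0, 0, by norm_num, ?_, ?_⟩
    · rw [Lq_mul, Lq_mul]; apply Lq_congr <;> norm_num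
    · rw [Rq_mul, Rq_mul]; apply Rq_congr <;> norm_num
  · have hPnn : (0:ℝ) ≤ p1^2+p2^2+p3^2 := by positivity
    set m := Real.sqrt (p1^2+p2^2+p3^2) with hmdef
    have hm2 : m^2 = p1^2+p2^2+p3^2 := Real.sq_sqrt hPnn
    have hmpos : 0 < m := Real.sqrt_pos.mpr (lt_of_le_of_ne hPnn (Ne.symm h0))
    rcases eq_or_ne (p1 + m) 0 with hc | hc
    · have hp1m : p1 = -m := by linarith
      have hp2 : p2 = 0 := by nlinarith [sq_nonneg p2, sq_nonneg p3]
      have hp3 : p3 = 0 := by nlinarith [sq_nonneg p2, sq_nonneg p3]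
      refine ⟨0, 0, 1, 0, by norm_num, ?_, ?_⟩
      · rw [Lq_mul, Lq_mul]; apply Lq_congr <;>
          first
            | ring1
            | linarith
      · rw [Rq_mul, Rq_mul]; apply Rq_congr <;>
          first
            | ring1
            | linarith
    · have habs : |p1| ≤ m := by
        rw [hmdef, ← Real.sqrt_sq_eq_abs]
        exact Real.sqrt_le_sqrt (by nlinarith [sq_nonneg p2, sq_nonneg p3])
      have hge : 0 ≤ p1 + m := by
        have := neg_abs_le p1
        linarith
      have hcpos : 0 < p1 + m := lt_of_le_of_ne hge (Ne.symm hc)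
      have hNpos : (0:ℝ) < 2*m*(p1+m) := by positivity
      set k := (Real.sqrt (2*m*(p1+m)))⁻¹ with hkdef
      have hsq : Real.sqrt (2*m*(p1+m)) ^ 2 = 2*m*(p1+m) := Real.sq_sqrt hNpos.le
      have hsne : Real.sqrt (2*m*(p1+m)) ≠ 0 := by positivity
      have hk : k^2 * (2*m*(p1+m)) = 1 := by
        rw [hkdef, inv_pow, hsq]; exact inv_mul_cancel₀ hNpos.ne'
      refine ⟨0, k*(p1+m), k*p2, k*p3, by linear_combination hk - k^2*hm2, ?_, ?_⟩
      · rw [Lq_mul, Lq_mul]; apply Lq_congr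
        · ring
        · linear_combination m*hk - k^2*(p1+2*m)*hm2
        · linear_combination (-(k^2*p2))*hm2
        · linear_combination (-(k^2*p3))*hm2
      · rw [Rq_mul, Rq_mul]; apply Rq_congr
        · ring
        · linear_combination m*hk - k^2*(p1+2*m)*hm2
        · linear_combination (-(k^2*p2))*hm2
        · linear_combination (-(k^2*p3))*hm2

lemma conjL (a0 a1 a2 a3 b0 b1 b2 b3 p1 p2 p3 : ℝ) (hb : b0^2+b1^2+b2^2+b3^2 = 1) :
    (Lq a0 a1 a2 a3 * Rq b0 (-b1) (-b2) (-b3)) * Lq 0 p1 p2 p3 *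
      (Rq b0 b1 b2 b3 * Lq a0 (-a1) (-a2) (-a3))
      = Lq a0 a1 a2 a3 * Lq 0 p1 p2 p3 * Lq a0 (-a1) (-a2) (-a3) := by
  rw [mul_assoc (Lq a0 a1 a2 a3), ← LRcomm 0 p1 p2 p3 b0 (-b1) (-b2) (-b3)]
  simp only [mul_assoc]
  rw [← mul_assoc (Rq b0 (-b1) (-b2) (-b3)) (Rq b0 b1 b2 b3),
    Rq_conj_self b0 b1 b2 b3 hb, one_mul, ← mul_assoc]

lemma conjR (a0 a1 a2 a3 b0 b1 b2 b3 q1 q2 q3 : ℝ) (ha : a0^2+a1^2+a2^2+a3^2 = 1) :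
    (Lq a0 a1 a2 a3 * Rq b0 (-b1) (-b2) (-b3)) * Rq 0 q1 q2 q3 *
      (Rq b0 b1 b2 b3 * Lq a0 (-a1) (-a2) (-a3))
      = Rq b0 (-b1) (-b2) (-b3) * Rq 0 q1 q2 q3 * Rq b0 b1 b2 b3 := by
  rw [LRcomm a0 a1 a2 a3 b0 (-b1) (-b2) (-b3),
    mul_assoc (Rq b0 (-b1) (-b2) (-b3)),
    LRcomm a0 a1 a2 a3 0 q1 q2 q3]
  simp only [mul_assoc]
  rw [← mul_assoc (Lq a0 a1 a2 a3), LRcomm a0 a1 a2 a3 b0 b1 b2 b3,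
    mul_assoc (Rq b0 b1 b2 b3), Lq_conj_self a0 a1 a2 a3 ha, mul_one, ← mul_assoc]

lemma eta4 (A : Matrix (Fin 4) (Fin 4) ℝ) :
    A = !![A 0 0, A 0 1, A 0 2, A 0 3; A 1 0, A 1 1, A 1 2, A 1 3;
           A 2 0, A 2 1, A 2 2, A 2 3; A 3 0, A 3 1, A 3 2, A 3 3] := by
  ext i j
  fin_cases i <;> fin_cases j <;> rfl

lemma decomp4 (x y z u v w : ℝ) :
    !![0, x, y, z; -x, 0, u, v; -y, -u, 0, w; -z, -v, -w, 0] =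
      Lq 0 (-(x + w)/2) ((v - y)/2) (-(u + z)/2) +
      Rq 0 ((w - x)/2) (-(y + v)/2) ((u - z)/2) := by
  ext i j
  fin_cases i <;> fin_cases j <;> simp [Lq, Rq] <;> ring

lemma normform (mp mq t s : ℝ) (ht : t = -(mp + mq)) (hs : s = mq - mp) :
    Lq 0 mp 0 0 + Rq 0 mq 0 0 = !![0, t, 0, 0; -t, 0, 0, 0; 0, 0, 0, s; 0, 0, -s, 0] := by
  subst ht; subst hs
  ext i j
  fin_cases i <;> fin_cases j <;>
    simp [Lq, Rq, Matrix.vecHead, Matrix.vecTail] <;> ring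

/-- every real antisymmetric 4×4 matrix `F` can be brought into normal
form by a special orthogonal transformation: there is `S ∈ SO(4)` such that `S F Sᵀ`
has all entries zero except the `(1,2), (2,1), (3,4), (4,3)` entries, with
`|(SFSᵀ)₁₂| = (1/√2)·√(Σ_{i<j}F_{ij}² + √δ)` and
`|(SFSᵀ)₃₄| = (1/√2)·√(Σ_{i<j}F_{ij}² − √δ)`, where
`δ = [(F₁₃+F₂₄)² + (F₁₂−F₃₄)² + (F₁₄−F₂₃)²]·[(F₁₃−F₂₄)² + (F₁₂+F₃₄)² + (F₁₄+F₂₃)²]`. -/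
theorem stmt_19 (F : Matrix (Fin 4) (Fin 4) ℝ) (hF : Fᵀ = -F) :
    ∃ S : Matrix (Fin 4) (Fin 4) ℝ, S ∈ Matrix.orthogonalGroup (Fin 4) ℝ ∧ S.det = 1 ∧
      ∃ t s : ℝ,
        S * F * Sᵀ = !![0, t, 0, 0;
                        -t, 0, 0, 0;
                        0, 0, 0, s;
                        0, 0, -s, 0] ∧
        |t| = (1 / Real.sqrt 2) * Real.sqrt
            ((F 0 1 ^ 2 + F 0 2 ^ 2 + F 0 3 ^ 2 + F 1 2 ^ 2 + F 1 3 ^ 2 + F 2 3 ^ 2) +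
              Real.sqrt
                (((F 0 2 + F 1 3) ^ 2 + (F 0 1 - F 2 3) ^ 2 + (F 0 3 - F 1 2) ^ 2) *
                 ((F 0 2 - F 1 3) ^ 2 + (F 0 1 + F 2 3) ^ 2 + (F 0 3 + F 1 2) ^ 2))) ∧
        |s| = (1 / Real.sqrt 2) * Real.sqrt
            ((F 0 1 ^ 2 + F 0 2 ^ 2 + F 0 3 ^ 2 + F 1 2 ^ 2 + F 1 3 ^ 2 + F 2 3 ^ 2) -
              Real.sqrt
                (((F 0 2 + F 1 3) ^ 2 + (F 0 1 - F 2 3) ^ 2 + (F 0 3 - F 1 2) ^ 2) *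
                 ((F 0 2 - F 1 3) ^ 2 + (F 0 1 + F 2 3) ^ 2 + (F 0 3 + F 1 2) ^ 2))) := by
  have haux : ∀ i j, F j i = -F i j := by
    intro i j
    have h := congrFun (congrFun hF i) j
    simpa using h
  have e00 : F 0 0 = 0 := by linarith [haux 0 0]
  have e11 : F 1 1 = 0 := by linarith [haux 1 1]
  have e22 : F 2 2 = 0 := by linarith [haux 2 2]
  have e33 : F 3 3 = 0 := by linarith [haux 3 3]
  have hdecomp : F =
      Lq 0 (-(F 0 1 + F 2 3)/2) ((F 1 3 - F 0 2)/2) (-(F 1 2 + F 0 3)/2) +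
      Rq 0 ((F 2 3 - F 0 1)/2) (-(F 0 2 + F 1 3)/2) ((F 1 2 - F 0 3)/2) := by
    conv_lhs => rw [eta4 F]
    rw [e00, e11, e22, e33, haux 0 1, haux 0 2, haux 0 3, haux 1 2, haux 1 3, haux 2 3]
    exact decomp4 (F 0 1) (F 0 2) (F 0 3) (F 1 2) (F 1 3) (F 2 3)
  obtain ⟨a0, a1, a2, a3, ha, haL, -⟩ :=
    rot_exists (-(F 0 1 + F 2 3)/2) ((F 1 3 - F 0 2)/2) (-(F 1 2 + F 0 3)/2)
  obtain ⟨b0, b1, b2, b3, hb, -, hbR⟩ :=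
    rot_exists ((F 2 3 - F 0 1)/2) (-(F 0 2 + F 1 3)/2) ((F 1 2 - F 0 3)/2)
  set mp := Real.sqrt ((-(F 0 1 + F 2 3)/2)^2 + ((F 1 3 - F 0 2)/2)^2 + (-(F 1 2 + F 0 3)/2)^2)
    with hmpdef
  set mq := Real.sqrt (((F 2 3 - F 0 1)/2)^2 + (-(F 0 2 + F 1 3)/2)^2 + ((F 1 2 - F 0 3)/2)^2)
    with hmqdef
  have hmp2 : mp^2 = (-(F 0 1 + F 2 3)/2)^2 + ((F 1 3 - F 0 2)/2)^2 + (-(F 1 2 + F 0 3)/2)^2 := by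
    rw [hmpdef]; exact Real.sq_sqrt (by positivity)
  have hmq2 : mq^2 = ((F 2 3 - F 0 1)/2)^2 + (-(F 0 2 + F 1 3)/2)^2 + ((F 1 2 - F 0 3)/2)^2 := by
    rw [hmqdef]; exact Real.sq_sqrt (by positivity)
  have hmpnn : 0 ≤ mp := by rw [hmpdef]; positivity
  have hmqnn : 0 ≤ mq := by rw [hmqdef]; positivity
  have hδ : Real.sqrt
      (((F 0 2 + F 1 3) ^ 2 + (F 0 1 - F 2 3) ^ 2 + (F 0 3 - F 1 2) ^ 2) *
       ((F 0 2 - F 1 3) ^ 2 + (F 0 1 + F 2 3) ^ 2 + (F 0 3 + F 1 2) ^ 2)) = 2*mq*(2*mp) := by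
    have h1 : (F 0 2 + F 1 3) ^ 2 + (F 0 1 - F 2 3) ^ 2 + (F 0 3 - F 1 2) ^ 2 = (2*mq)^2 := by
      rw [mul_pow]; linear_combination (-4:ℝ) * hmq2
    have h2 : (F 0 2 - F 1 3) ^ 2 + (F 0 1 + F 2 3) ^ 2 + (F 0 3 + F 1 2) ^ 2 = (2*mp)^2 := by
      rw [mul_pow]; linear_combination (-4:ℝ) * hmp2
    rw [h1, h2, show (2*mq)^2*(2*mp)^2 = (2*mq*(2*mp))^2 from by ring,
      Real.sqrt_sq (mul_nonneg (by linarith) (by linarith))]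
  refine ⟨Lq a0 a1 a2 a3 * Rq b0 (-b1) (-b2) (-b3), ?_, ?_, -(mp+mq), mq - mp, ?_, ?_, ?_⟩
  · rw [Matrix.mem_orthogonalGroup_iff]
    have hstar : star (Lq a0 a1 a2 a3 * Rq b0 (-b1) (-b2) (-b3)) =
        (Lq a0 a1 a2 a3 * Rq b0 (-b1) (-b2) (-b3))ᵀ := by
      ext i j; simp [Matrix.star_apply]
    rw [Matrix.transpose_mul, Rq_transpose, Lq_transpose]
    simp only [neg_neg]
    rw [mul_assoc, ← mul_assoc (Rq b0 (-b1) (-b2) (-b3)),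
      Rq_conj_self b0 b1 b2 b3 hb, one_mul, Lq_conj_self a0 a1 a2 a3 ha]
  · rw [Matrix.det_mul, Lq_det, Rq_det]
    linear_combination ((b0^2+b1^2+b2^2+b3^2)^2*(a0^2+a1^2+a2^2+a3^2+1))*ha +
      (b0^2+b1^2+b2^2+b3^2+1)*hb
  · have hST : (Lq a0 a1 a2 a3 * Rq b0 (-b1) (-b2) (-b3))ᵀ =
        Rq b0 b1 b2 b3 * Lq a0 (-a1) (-a2) (-a3) := by
      rw [Matrix.transpose_mul, Rq_transpose, Lq_transpose]; simp only [neg_neg]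
    rw [hST, hdecomp, mul_add, add_mul,
      conjL a0 a1 a2 a3 b0 b1 b2 b3 _ _ _ hb, conjR a0 a1 a2 a3 b0 b1 b2 b3 _ _ _ ha,
      haL, hbR]
    exact normform mp mq _ _ rfl rfl
  · rw [hδ, show (F 0 1 ^ 2 + F 0 2 ^ 2 + F 0 3 ^ 2 + F 1 2 ^ 2 + F 1 3 ^ 2 + F 2 3 ^ 2) +
        2*mq*(2*mp) = 2*(mp+mq)^2 from by
          linear_combination (-2:ℝ)*hmp2 + (-2:ℝ)*hmq2,
      Real.sqrt_mul (by norm_num : (0:ℝ) ≤ 2), Real.sqrt_sq (by linarith),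
      abs_neg, abs_of_nonneg (by linarith)]
    have h2 : Real.sqrt 2 ≠ 0 := by positivity
    field_simp
  · rw [hδ, show (F 0 1 ^ 2 + F 0 2 ^ 2 + F 0 3 ^ 2 + F 1 2 ^ 2 + F 1 3 ^ 2 + F 2 3 ^ 2) -
        2*mq*(2*mp) = 2*(mq-mp)^2 from by
          linear_combination (-2:ℝ)*hmp2 + (-2:ℝ)*hmq2,
      Real.sqrt_mul (by norm_num : (0:ℝ) ≤ 2), Real.sqrt_sq_eq_abs]
    have h2 : Real.sqrt 2 ≠ 0 := by positivity
    field_simp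
end
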